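/- arXiv:1012.4539 — 3 statements merged into one kernel-verified Lean document; each statement's English description precedes it below -/
import Mathlib

section
/- If A and B are g×n totally unimodular matrices (every square submatrix has determinant in {0,1,-1}) with the same support (a_{ij} ≠ 0 if and only if b_{ij} ≠ 0 for all i,j), then A can be transformed into B by a sequence of row negations and column negations; equivalently, there exist diagonal matrices D ∈ GL_g(ℤ) and E ∈ GL_n(ℤ) with diagonal entries ±1 such that D·A·E = B. -/
/-!
Induct on the rows. Once `A` and `B` agree off one row `r`, call two columns adjacent when they
share a nonzero entry in some other row. Let `x`, `y` be columns with `A r x, A r y ≠ 0`, joined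
by a shortest walk along which row `r` vanishes in between. The rows used by the walk, together
with `r`, cut out a chordless cycle, whose determinant is `a D ± b E` with `a = A r x`,
`b = A r y` and `D, E = ±1` (two triangular minors). Total unimodularity forces this to vanish,
for `A` as for `B`, and comparing the two gives `A r x * B r x = A r y * B r y`. So the sign
`A r j * B r j` is constant on components, which gives the column negations; every other row
then takes the common sign of the columns in its support.
-/

section Signs

variable {R : Type*}

lemma eq_one_or_eq_neg_one_of_mem_range_signType [Zero R] [One R] [Neg R] {x : R}
    (hx : x ∈ Set.range (SignType.cast : SignType → R)) (h0 : x ≠ 0) : x = 1 ∨ x = -1 := by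
  obtain ⟨s, rfl⟩ := hx
  cases s <;> simp_all

lemma mul_eq_one_or_eq_neg_one [Ring R] {x y : R} (hx : x = 1 ∨ x = -1) (hy : y = 1 ∨ y = -1) :
    x * y = 1 ∨ x * y = -1 := by
  rcases hx with rfl | rfl <;> rcases hy with rfl | rfl <;> simp

lemma Finset.prod_eq_one_or_eq_neg_one [CommRing R] {α : Type*} (s : Finset α) {f : α → R}
    (hf : ∀ a ∈ s, f a = 1 ∨ f a = -1) : ∏ a ∈ s, f a = 1 ∨ ∏ a ∈ s, f a = -1 :=
  Finset.prod_induction f (fun x => x = 1 ∨ x = -1) (fun _ _ => mul_eq_one_or_eq_neg_one)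
    (Or.inl rfl) hf

lemma mul_mem_range_signType_of_eq_one_or_eq_neg_one [Ring R] {x y : R}
    (hx : x ∈ Set.range (SignType.cast : SignType → R)) (hy : y = 1 ∨ y = -1) :
    x * y ∈ Set.range (SignType.cast : SignType → R) := by
  obtain ⟨s, rfl⟩ := hx
  rcases hy with rfl | rfl
  exacts [⟨s, by simp⟩, ⟨-s, by simp⟩]

variable [CommRing R] [LinearOrder R] [IsStrictOrderedRing R]

lemma add_eq_zero_of_mem_range_signType {x y : R} (hx : x = 1 ∨ x = -1) (hy : y = 1 ∨ y = -1)
    (hxy : x + y ∈ Set.range (SignType.cast : SignType → R)) : x + y = 0 := by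
  obtain ⟨s, hs⟩ := hxy
  rcases hx with rfl | rfl <;> rcases hy with rfl | rfl <;> cases s <;>
    norm_num at hs <;> norm_num

lemma mul_eq_mul_of_add_mem_range_signType {a b a' b' p q : R}
    (ha : a = 1 ∨ a = -1) (hb : b = 1 ∨ b = -1) (ha' : a' = 1 ∨ a' = -1)
    (hb' : b' = 1 ∨ b' = -1) (hp : p = 1 ∨ p = -1) (hq : q = 1 ∨ q = -1)
    (h : a * p + b * q ∈ Set.range (SignType.cast : SignType → R))
    (h' : a' * p + b' * q ∈ Set.range (SignType.cast : SignType → R)) :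
    a * a' = b * b' := by
  -- both sums lie in `{-2, 0, 2}`, hence vanish
  have e := add_eq_zero_of_mem_range_signType (mul_eq_one_or_eq_neg_one ha hp)
    (mul_eq_one_or_eq_neg_one hb hq) h
  have e' := add_eq_zero_of_mem_range_signType (mul_eq_one_or_eq_neg_one ha' hp)
    (mul_eq_one_or_eq_neg_one hb' hq) h'
  calc a * a' = (a * p) * (a' * p) := by
        rw [mul_mul_mul_comm, mul_self_eq_one_iff.mpr hp, mul_one]
    _ = (b * q) * (b' * q) := by
        rw [eq_neg_of_add_eq_zero_left e, eq_neg_of_add_eq_zero_left e', neg_mul_neg]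
    _ = b * b' := by rw [mul_mul_mul_comm, mul_self_eq_one_iff.mpr hq, mul_one]

end Signs

section Determinant

variable {R : Type*} [CommRing R] {m : ℕ}

lemma Matrix.det_of_row_zero_vanishing_inside (hm : 0 < m)
    (M : Matrix (Fin (m + 1)) (Fin (m + 1)) R)
    (h : ∀ u, u ≠ 0 → u ≠ Fin.last m → M 0 u = 0) :
    M.det = M 0 0 * (M.submatrix Fin.succ Fin.succ).det
      + (-1) ^ m * M 0 (Fin.last m) * (M.submatrix Fin.succ Fin.castSucc).det := by
  have h0 : (0 : Fin (m + 1)) ≠ Fin.last m := by simp [Fin.ext_iff]; omega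
  rw [det_succ_row_zero, ← Finset.sum_subset (Finset.subset_univ {0, Fin.last m}),
    Finset.sum_pair h0]
  · simp [Fin.succAbove_last]
  · intro u _ hu
    simp only [Finset.mem_insert, Finset.mem_singleton, not_or] at hu
    simp [h u hu.1 hu.2]

variable {M : Matrix (Fin (m + 1)) (Fin (m + 1)) R}
  (hM : ∀ s : Fin m, ∀ u, M s.succ u ≠ 0 → u = s.castSucc ∨ u = s.succ)
include hM

lemma Matrix.det_submatrix_succ_succ_of_bidiagonal :
    (M.submatrix Fin.succ Fin.succ).det = ∏ s : Fin m, M s.succ s.succ := by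
  refine det_of_isLowerTriangular _ fun s u (hsu : s < u) => ?_
  by_contra hne
  rw [Fin.lt_def] at hsu
  rcases hM s u.succ hne with h | h <;>
    simp only [Fin.ext_iff, Fin.val_succ, Fin.val_castSucc] at h <;> omega

lemma Matrix.det_submatrix_succ_castSucc_of_bidiagonal :
    (M.submatrix Fin.succ Fin.castSucc).det = ∏ s : Fin m, M s.succ s.castSucc := by
  refine det_of_isUpperTriangular fun s u (hsu : u < s) => ?_
  by_contra hne
  rw [Fin.lt_def] at hsu
  rcases hM s u.castSucc hne with h | h <;>
    simp only [Fin.ext_iff, Fin.val_succ, Fin.val_castSucc] at h <;> omega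

end Determinant

namespace Matrix.IsTotallyUnimodular

variable {R : Type*} [CommRing R]

lemma det_mem_range {n : Type*} [Fintype n] [DecidableEq n] {M : Matrix n n R}
    (hM : M.IsTotallyUnimodular) : M.det ∈ Set.range (SignType.cast : SignType → R) := by
  simpa using (M.isTotallyUnimodular_iff_fintype.mp hM) n id id

lemma apply_eq_one_or_eq_neg_one {ι κ : Type*} {A : Matrix ι κ R} (hA : A.IsTotallyUnimodular)
    {i : ι} {j : κ} (h : A i j ≠ 0) : A i j = 1 ∨ A i j = -1 :=
  eq_one_or_eq_neg_one_of_mem_range_signType (hA.apply i j) h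

variable [LinearOrder R] [IsStrictOrderedRing R]

/-- The hypotheses say that `M` and `N` are signings of one chordless cycle which differ at most
in row `0`, the row closing the cycle. -/
theorem mul_corners_eq {m : ℕ} (hm : 0 < m) {M N : Matrix (Fin (m + 1)) (Fin (m + 1)) R}
    (hM : M.IsTotallyUnimodular) (hN : N.IsTotallyUnimodular)
    (hMN : ∀ s : Fin m, M s.succ = N s.succ) (hsupp : ∀ u, M 0 u ≠ 0 ↔ N 0 u ≠ 0)
    (hrow : ∀ u, u ≠ 0 → u ≠ Fin.last m → M 0 u = 0)
    (hpath : ∀ s : Fin m, ∀ u, M s.succ u ≠ 0 → u = s.castSucc ∨ u = s.succ)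
    (hdiag : ∀ s : Fin m, M s.succ s.castSucc ≠ 0 ∧ M s.succ s.succ ≠ 0)
    (h0 : M 0 0 ≠ 0) (hlast : M 0 (Fin.last m) ≠ 0) :
    M 0 0 * N 0 0 = M 0 (Fin.last m) * N 0 (Fin.last m) := by
  have hminor (c : Fin m → Fin (m + 1)) : N.submatrix Fin.succ c = M.submatrix Fin.succ c := by
    ext s u
    simp [hMN]
  have hrowN (u) (hu0 : u ≠ 0) (hul : u ≠ Fin.last m) : N 0 u = 0 := by
    simpa using mt (hsupp u).mpr (not_not.mpr (hrow u hu0 hul))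
  have hP : (M.submatrix Fin.succ Fin.succ).det = 1 ∨
      (M.submatrix Fin.succ Fin.succ).det = -1 := by
    rw [det_submatrix_succ_succ_of_bidiagonal hpath]
    exact Finset.univ.prod_eq_one_or_eq_neg_one fun s _ =>
      hM.apply_eq_one_or_eq_neg_one (hdiag s).2
  have hQ : (M.submatrix Fin.succ Fin.castSucc).det = 1 ∨
      (M.submatrix Fin.succ Fin.castSucc).det = -1 := by
    rw [det_submatrix_succ_castSucc_of_bidiagonal hpath]
    exact Finset.univ.prod_eq_one_or_eq_neg_one fun s _ =>
      hM.apply_eq_one_or_eq_neg_one (hdiag s).1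
  refine mul_eq_mul_of_add_mem_range_signType (hM.apply_eq_one_or_eq_neg_one h0)
    (hM.apply_eq_one_or_eq_neg_one hlast) (hN.apply_eq_one_or_eq_neg_one ((hsupp 0).mp h0))
    (hN.apply_eq_one_or_eq_neg_one ((hsupp _).mp hlast)) hP
    (mul_eq_one_or_eq_neg_one (neg_one_pow_eq_or R m) hQ) ?_ ?_
  · convert hM.det_mem_range using 1
    rw [det_of_row_zero_vanishing_inside hm M hrow]
    ring
  · convert hN.det_mem_range using 1
    rw [det_of_row_zero_vanishing_inside hm N hrowN, hminor, hminor]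
    ring

end Matrix.IsTotallyUnimodular

lemma SimpleGraph.Walk.le_add_one_of_adj_getVert {V : Type*} {G : SimpleGraph V} {u v : V}
    {p : G.Walk u v} (hp : p.length = G.dist u v) {a b : ℕ} (hb : b ≤ p.length)
    (h : G.Adj (p.getVert a) (p.getVert b)) : b ≤ a + 1 := by
  have := G.dist_le ((p.take a).append ((p.drop b).cons h))
  simp only [Walk.length_append, Walk.length_cons, Walk.take_length, Walk.drop_length] at this
  omega

namespace Matrix

variable {ι κ R : Type*}

def columnGraphOffRow [Zero R] (A : Matrix ι κ R) (r : ι) : SimpleGraph κ where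
  Adj x y := x ≠ y ∧ ∃ i, i ≠ r ∧ A i x ≠ 0 ∧ A i y ≠ 0
  symm := ⟨fun _ _ ⟨hxy, i, hi, hx, hy⟩ => ⟨hxy.symm, i, hi, hy, hx⟩⟩
  loopless := ⟨fun _ h => h.1 rfl⟩

lemma columnGraphOffRow_adj [Zero R] {A : Matrix ι κ R} {r : ι} {x y : κ} :
    (A.columnGraphOffRow r).Adj x y ↔ x ≠ y ∧ ∃ i, i ≠ r ∧ A i x ≠ 0 ∧ A i y ≠ 0 :=
  Iff.rfl

/-- A row used by a shortest walk has no chords. -/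
lemma eq_or_eq_add_one_of_shortest_walk_columnGraphOffRow [Zero R] {A : Matrix ι κ R} {r : ι}
    {x y : κ} {p : (A.columnGraphOffRow r).Walk x y}
    (hp : p.length = (A.columnGraphOffRow r).dist x y)
    {i : ι} (hi : i ≠ r) {t : ℕ} (ht : t < p.length) (hit : A i (p.getVert t) ≠ 0)
    (hit' : A i (p.getVert (t + 1)) ≠ 0) {v : ℕ} (hv : v ≤ p.length)
    (hiv : A i (p.getVert v) ≠ 0) : v = t ∨ v = t + 1 := by
  have hinj := (p.isPath_of_length_eq_dist hp).getVert_injOn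
  by_contra hne
  push Not at hne
  rcases lt_or_gt_of_ne hne.1 with hvt | hvt
  · have hne' : p.getVert v ≠ p.getVert (t + 1) := fun h => by
      have := hinj hv (show t + 1 ≤ p.length by omega) h
      omega
    have := p.le_add_one_of_adj_getVert hp ht
      (columnGraphOffRow_adj.mpr ⟨hne', i, hi, hiv, hit'⟩)
    omega
  · have hne' : p.getVert t ≠ p.getVert v := fun h => by
      have := hinj (show t ≤ p.length by omega) hv h
      omega
    have := p.le_add_one_of_adj_getVert hp hv
      (columnGraphOffRow_adj.mpr ⟨hne', i, hi, hit, hiv⟩)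
    omega

variable [CommRing R] [LinearOrder R] [IsStrictOrderedRing R] {A B : Matrix ι κ R} {r : ι}
  (hA : A.IsTotallyUnimodular) (hB : B.IsTotallyUnimodular)
  (hsupp : ∀ i j, A i j ≠ 0 ↔ B i j ≠ 0) (hrows : ∀ i, i ≠ r → A i = B i)
include hA hB hsupp hrows

/-- The rows met by a shortest walk, together with row `r`, cut out a chordless cycle. -/
lemma mul_eq_of_shortest_walk_columnGraphOffRow {x y : κ}
    (p : (A.columnGraphOffRow r).Walk x y)
    (hp : p.length = (A.columnGraphOffRow r).dist x y) (hpos : 0 < p.length)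
    (hinside : ∀ t, 0 < t → t < p.length → A r (p.getVert t) = 0)
    (hx : A r x ≠ 0) (hy : A r y ≠ 0) : A r x * B r x = A r y * B r y := by
  choose I hI using fun s : Fin p.length =>
    (columnGraphOffRow_adj.mp (p.adj_getVert_succ s.isLt)).2
  let F : Fin (p.length + 1) → ι := Fin.cons r I
  let G : Fin (p.length + 1) → κ := fun u => p.getVert u
  have := (hA.submatrix F G).mul_corners_eq hpos (hB.submatrix F G) ?_ ?_ ?_ ?_ ?_ ?_ ?_
  · simpa [F, G] using this
  · intro s
    funext u
    simp [F, hrows _ (hI s).1]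
  · intro u
    simp [F, hsupp]
  · intro u hu0 hul
    simp only [submatrix_apply, F, G, Fin.cons_zero]
    refine hinside u (Fin.pos_iff_ne_zero.mpr hu0) ?_
    simpa [Fin.ext_iff] using
      lt_of_le_of_ne (Nat.lt_succ_iff.mp u.isLt) (Fin.val_ne_of_ne hul)
  · intro s u hu
    simp only [submatrix_apply, F, G, Fin.cons_succ] at hu
    rcases eq_or_eq_add_one_of_shortest_walk_columnGraphOffRow hp (hI s).1 s.isLt (hI s).2.1
      (hI s).2.2 (Nat.lt_succ_iff.mp u.isLt) hu with h | h
    · exact Or.inl (Fin.ext h)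
    · exact Or.inr (Fin.ext h)
  · intro s
    simpa [F, G] using (hI s).2
  · simpa [F, G] using hx
  · simpa [F, G] using hy

theorem mul_eq_of_reachable_columnGraphOffRow {x y : κ}
    (hxy : (A.columnGraphOffRow r).Reachable x y)
    (hx : A r x ≠ 0) (hy : A r y ≠ 0) : A r x * B r x = A r y * B r y := by
  induction hd : (A.columnGraphOffRow r).dist x y using Nat.strong_induction_on
    generalizing x y with
  | _ k ih =>
  obtain ⟨p, hp⟩ := hxy.exists_walk_length_eq_dist
  rcases Nat.eq_zero_or_pos p.length with h0 | hpos
  · rw [p.eq_of_length_eq_zero h0]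
  by_cases hmid : ∃ t, 0 < t ∧ t < p.length ∧ A r (p.getVert t) ≠ 0
  · obtain ⟨t, ht0, ht, hz⟩ := hmid
    have h₁ := (A.columnGraphOffRow r).dist_le (p.take t)
    have h₂ := (A.columnGraphOffRow r).dist_le (p.drop t)
    rw [SimpleGraph.Walk.take_length] at h₁
    rw [SimpleGraph.Walk.drop_length] at h₂
    exact (ih _ (by omega) (p.take t).reachable hx hz rfl).trans
      (ih _ (by omega) (p.drop t).reachable hz hy rfl)
  · push Not at hmid
    exact mul_eq_of_shortest_walk_columnGraphOffRow hA hB hsupp hrows p hp hpos hmid hx hy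

end Matrix

lemma SimpleGraph.exists_extension_reachable_invariant {V β : Type*} (G : SimpleGraph V)
    {P : β → Prop} {S : Set V} {f : V → β} (b : β) (hb : P b) (hfS : ∀ x ∈ S, P (f x))
    (hf : ∀ x ∈ S, ∀ y ∈ S, G.Reachable x y → f x = f y) :
    ∃ e : V → β, (∀ x, P (e x)) ∧ (∀ x ∈ S, e x = f x) ∧
      ∀ x y, G.Reachable x y → e x = e y := by
  classical
  let e x := if h : ∃ y ∈ S, G.Reachable x y then f h.choose else b
  have he (x) (h : ∃ y ∈ S, G.Reachable x y) (y) (hy : y ∈ S) (hxy : G.Reachable x y) :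
      e x = f y := by
    simp only [e, dif_pos h]
    exact hf _ h.choose_spec.1 y hy (h.choose_spec.2.symm.trans hxy)
  refine ⟨e, fun x => ?_, fun x hx => he x ⟨x, hx, .refl x⟩ x hx (.refl x), fun x y hxy => ?_⟩
  · by_cases h : ∃ y ∈ S, G.Reachable x y
    · exact he x h _ h.choose_spec.1 h.choose_spec.2 ▸ hfS _ h.choose_spec.1
    · simpa [e, dif_neg h] using hb
  · by_cases h : ∃ z ∈ S, G.Reachable x z
    · obtain ⟨z, hz, hxz⟩ := h
      have hyz := hxy.symm.trans hxz
      rw [he x ⟨z, hz, hxz⟩ z hz hxz, he y ⟨z, hz, hyz⟩ z hz hyz]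
    · have h' : ¬∃ z ∈ S, G.Reachable y z := fun ⟨z, hz, hyz⟩ => h ⟨z, hz, hxy.trans hyz⟩
      simp only [e, dif_neg h, dif_neg h']

namespace Matrix

variable {ι κ R : Type*}

def SignEquiv [Ring R] (A B : Matrix ι κ R) : Prop :=
  ∃ d : ι → R, ∃ e : κ → R, (∀ i, d i = 1 ∨ d i = -1) ∧ (∀ j, e j = 1 ∨ e j = -1) ∧
    ∀ i j, d i * A i j * e j = B i j

namespace SignEquiv

variable [CommRing R] {A B C : Matrix ι κ R}

lemma trans (h₁ : SignEquiv A B) (h₂ : SignEquiv B C) : SignEquiv A C := by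
  obtain ⟨d₁, e₁, hd₁, he₁, h₁⟩ := h₁
  obtain ⟨d₂, e₂, hd₂, he₂, h₂⟩ := h₂
  refine ⟨fun i => d₂ i * d₁ i, fun j => e₁ j * e₂ j,
    fun i => mul_eq_one_or_eq_neg_one (hd₂ i) (hd₁ i),
    fun j => mul_eq_one_or_eq_neg_one (he₁ j) (he₂ j), fun i j => ?_⟩
  rw [← h₂, ← h₁]
  ring

lemma ne_zero_iff (h : SignEquiv A B) (i : ι) (j : κ) : A i j ≠ 0 ↔ B i j ≠ 0 := by
  obtain ⟨d, e, hd, he, h⟩ := h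
  rw [← h i j]
  rcases hd i with hdi | hdi <;> rcases he j with hej | hej <;> simp [hdi, hej]

lemma isTotallyUnimodular (h : SignEquiv A B) (hA : A.IsTotallyUnimodular) :
    B.IsTotallyUnimodular := by
  obtain ⟨d, e, hd, he, h⟩ := h
  rw [isTotallyUnimodular_iff] at hA ⊢
  intro k f g
  have hsub : B.submatrix f g = diagonal (d ∘ f) * A.submatrix f g * diagonal (e ∘ g) := by
    ext i j
    simp [diagonal_mul, mul_diagonal, ← h]
  rw [hsub, det_mul, det_mul, det_diagonal, det_diagonal, mul_comm (∏ i, (d ∘ f) i)]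
  exact mul_mem_range_signType_of_eq_one_or_eq_neg_one
    (mul_mem_range_signType_of_eq_one_or_eq_neg_one (hA k f g)
      (Finset.univ.prod_eq_one_or_eq_neg_one fun i _ => hd (f i)))
    (Finset.univ.prod_eq_one_or_eq_neg_one fun j _ => he (g j))

end SignEquiv

variable [CommRing R] [LinearOrder R] [IsStrictOrderedRing R]

theorem signEquiv_of_eq_off_row {A B : Matrix ι κ R} (hA : A.IsTotallyUnimodular)
    (hB : B.IsTotallyUnimodular) (hsupp : ∀ i j, A i j ≠ 0 ↔ B i j ≠ 0) (r : ι)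
    (hrows : ∀ i, i ≠ r → A i = B i) : SignEquiv A B := by
  classical
  obtain ⟨e, he, her, hreach⟩ := (A.columnGraphOffRow r).exists_extension_reachable_invariant
    (P := fun x => x = 1 ∨ x = -1) (S := {j | A r j ≠ 0}) (f := fun j => A r j * B r j)
    1 (Or.inl rfl)
    (fun j hj => mul_eq_one_or_eq_neg_one (hA.apply_eq_one_or_eq_neg_one hj)
      (hB.apply_eq_one_or_eq_neg_one ((hsupp r j).mp hj)))
    (fun x hx y hy hxy => mul_eq_of_reachable_columnGraphOffRow hA hB hsupp hrows hxy hx hy)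
  let d i := if h : i ≠ r ∧ ∃ j, A i j ≠ 0 then e h.2.choose else 1
  have hd (i j) (hi : i ≠ r) (hij : A i j ≠ 0) : d i = e j := by
    have h : i ≠ r ∧ ∃ j, A i j ≠ 0 := ⟨hi, j, hij⟩
    simp only [d, dif_pos h]
    by_cases hj : h.2.choose = j
    · rw [hj]
    · exact hreach _ _ (columnGraphOffRow_adj.mpr ⟨hj, i, hi, h.2.choose_spec, hij⟩).reachable
  refine ⟨d, e, fun i => ?_, he, fun i j => ?_⟩
  · by_cases h : i ≠ r ∧ ∃ j, A i j ≠ 0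
    · simpa only [d, dif_pos h] using he _
    · simp [d, dif_neg h]
  by_cases hij : A i j = 0
  · have hB0 : B i j = 0 := by simpa [hij] using hsupp i j
    rw [hij, hB0, mul_zero, zero_mul]
  by_cases hi : i = r
  · subst hi
    rw [her j hij, show d i = 1 by simp [d], one_mul, ← mul_assoc,
      mul_self_eq_one_iff.mpr (hA.apply_eq_one_or_eq_neg_one hij), one_mul]
  · rw [← congrFun (hrows i hi) j, hd i j hi hij, mul_right_comm,
      mul_self_eq_one_iff.mpr (he j), one_mul]

theorem signEquiv_of_isTotallyUnimodular {g : ℕ} {A B : Matrix (Fin g) κ R}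
    (hA : A.IsTotallyUnimodular) (hB : B.IsTotallyUnimodular)
    (hsupp : ∀ i j, A i j ≠ 0 ↔ B i j ≠ 0) : SignEquiv A B := by
  induction g with
  | zero => exact ⟨1, 1, fun i => i.elim0, fun _ => Or.inl rfl, fun i => i.elim0⟩
  | succ g ih =>
    obtain ⟨d, e, hd, he, hde⟩ := ih (hA.submatrix Fin.castSucc id)
      (hB.submatrix Fin.castSucc id) fun i j => hsupp _ _
    have hA' : SignEquiv A (of fun i j => Fin.snoc (α := fun _ => R) d 1 i * A i j * e j) :=
      ⟨_, e, Fin.lastCases (by simp) (by simpa using hd), he, fun _ _ => rfl⟩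
    refine hA'.trans (signEquiv_of_eq_off_row (hA'.isTotallyUnimodular hA) hB
      (fun i j => (hA'.ne_zero_iff i j).symm.trans (hsupp i j)) (Fin.last g) fun i hi => ?_)
    obtain ⟨i, rfl⟩ := Fin.exists_castSucc_eq.mpr hi
    funext j
    simpa using hde i j

end Matrix

/-- **Truemper's lemma** (Lemma 9.2.6 in Truemper): two totally unimodular matrices with the
same support differ only by negations of rows and columns, i.e. there are diagonal `±1`
matrices `D` and `E` with `D * A * E = B`. -/
theorem tu_same_support_sign_equiv {g n : ℕ}
    (A B : Matrix (Fin g) (Fin n) ℝ)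
    (hA : A.IsTotallyUnimodular) (hB : B.IsTotallyUnimodular)
    (hsupp : ∀ i j, A i j ≠ 0 ↔ B i j ≠ 0) :
    ∃ d : Fin g → ℝ, ∃ e : Fin n → ℝ,
      (∀ i, d i = 1 ∨ d i = -1) ∧ (∀ j, e j = 1 ∨ e j = -1) ∧
      Matrix.diagonal d * A * Matrix.diagonal e = B := by
  obtain ⟨d, e, hd, he, hde⟩ := Matrix.signEquiv_of_isTotallyUnimodular hA hB hsupp
  refine ⟨d, e, hd, he, ?_⟩
  ext i j
  simp [Matrix.diagonal_mul, Matrix.mul_diagonal, hde]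
end

section
/- The specialization (edge-contraction) relation on combinatorial types of genus g tropical curves yields a graded partially ordered set, in which the rank of a combinatorial type (G,w) is the number of edges |E(G)|; moreover (G',w') is covered by (G,w) precisely when (G',w') is obtained from (G,w) by contracting a single edge. -/
/-- A weighted multigraph: vertices `Fin nV`, edges `Fin nE` with endpoints `s e`, `t e`,
and vertex weights `w`. -/
structure WGraph where
  nV : ℕ
  nE : ℕ
  s : Fin nE → Fin nV
  t : Fin nE → Fin nV
  w : Fin nV → ℕ

/-- Degree of a vertex (a loop counts twice). -/
def WGraph.degree (G : WGraph) (v : Fin G.nV) : ℕ :=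
  (Finset.univ.filter fun e => G.s e = v).card + (Finset.univ.filter fun e => G.t e = v).card

def WGraph.Connected (G : WGraph) : Prop :=
  ∀ u v : Fin G.nV, Relation.ReflTransGen
    (fun a b => ∃ e, (G.s e = a ∧ G.t e = b) ∨ (G.s e = b ∧ G.t e = a)) u v

/-- `(G,w)` is a combinatorial type of genus `g`: connected, every weight-zero vertex has
degree at least 3, and `(|E| - |V| + 1) + Σ_v w(v) = g` (written without subtraction). -/
def WGraph.IsType (g : ℕ) (G : WGraph) : Prop :=
  0 < G.nV ∧ G.Connected ∧ (∀ v, G.w v = 0 → 3 ≤ G.degree v) ∧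
    G.nE + 1 + ∑ v, G.w v = g + G.nV

/-- `Contract1 G G'` : `G'` is obtained from `G` by contracting the single edge `e₀`.
Contracting a loop deletes it and adds 1 to the weight of its base vertex; contracting a
non-loop edge deletes it and merges its endpoints, adding their weights. -/
def Contract1 (G G' : WGraph) : Prop :=
  ∃ e₀ : Fin G.nE, ∃ φV : Fin G.nV → Fin G'.nV,
    ∃ φE : {e : Fin G.nE // e ≠ e₀} ≃ Fin G'.nE,
    Function.Surjective φV ∧
    (∀ e : {e : Fin G.nE // e ≠ e₀},
      (G'.s (φE e) = φV (G.s e.1) ∧ G'.t (φE e) = φV (G.t e.1)) ∨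
      (G'.s (φE e) = φV (G.t e.1) ∧ G'.t (φE e) = φV (G.s e.1))) ∧
    ((G.s e₀ = G.t e₀ ∧ Function.Injective φV ∧
        ∀ v', G'.w v' = (∑ v ∈ Finset.univ.filter (fun v => φV v = v'), G.w v)
          + (if φV (G.s e₀) = v' then 1 else 0)) ∨
     (G.s e₀ ≠ G.t e₀ ∧
        (∀ a b, φV a = φV b ↔ (a = b ∨ (a = G.s e₀ ∧ b = G.t e₀) ∨ (a = G.t e₀ ∧ b = G.s e₀))) ∧
        ∀ v', G'.w v' = ∑ v ∈ Finset.univ.filter (fun v => φV v = v'), G.w v))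

/-- Specialization: a finite sequence of single edge contractions. -/
def Spec (G G' : WGraph) : Prop := Relation.ReflTransGen Contract1 G G'

lemma WGraph.degree_eq_sum (G : WGraph) (v : Fin G.nV) :
    G.degree v = ∑ e, ((if G.s e = v then 1 else 0) + (if G.t e = v then 1 else 0)) := by
  rw [WGraph.degree, Finset.card_filter, Finset.card_filter, ← Finset.sum_add_distrib]

lemma sum_subtype_ne {n : ℕ} (e₀ : Fin n) (f : Fin n → ℕ) :
    ∑ e : {e : Fin n // e ≠ e₀}, f e.1 + f e₀ = ∑ e, f e := by
  rw [← Finset.sum_subtype (Finset.univ.erase e₀) (by simp) f]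
  exact Finset.sum_erase_add _ _ (Finset.mem_univ e₀)

lemma card_subtype_ne {n : ℕ} (e₀ : Fin n) : Fintype.card {e : Fin n // e ≠ e₀} + 1 = n := by
  have := sum_subtype_ne e₀ (fun _ => (1:ℕ))
  simpa [Finset.card_univ] using this

lemma contract1_nE {G G' : WGraph} (hc : Contract1 G G') : G'.nE + 1 = G.nE := by
  obtain ⟨e₀, φV, φE, -⟩ := hc
  have := card_subtype_ne e₀
  rwa [Fintype.card_congr φE, Fintype.card_fin] at this

lemma contract1_isType {g : ℕ} {G G' : WGraph} (hG : G.IsType g) (hc : Contract1 G G') :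
    G'.IsType g := by
  obtain ⟨hpos, hconn, hdeg, hgen⟩ := hG
  have hnE : G'.nE + 1 = G.nE := contract1_nE hc
  obtain ⟨e₀, φV, φE, hsurj, hedge, hcase⟩ := hc
  have hpos' : 0 < G'.nV := (φV (G.s e₀)).pos
  -- degree transfer
  have hdeg' : ∀ v' : Fin G'.nV, G'.degree v' =
      ∑ e : {e : Fin G.nE // e ≠ e₀},
        ((if φV (G.s e.1) = v' then 1 else 0) + (if φV (G.t e.1) = v' then 1 else 0)) := by
    intro v'
    rw [WGraph.degree_eq_sum,
      ← Equiv.sum_comp φE (fun e' => (if G'.s e' = v' then 1 else 0) + (if G'.t e' = v' then 1 else 0))]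
    refine Finset.sum_congr rfl fun e _ => ?_
    rcases hedge e with ⟨h1, h2⟩ | ⟨h1, h2⟩ <;> rw [h1, h2]
    exact Nat.add_comm _ _
  -- connectivity
  have hφe₀ : φV (G.s e₀) = φV (G.t e₀) := by
    rcases hcase with ⟨h1, -, -⟩ | ⟨-, h2, -⟩
    · rw [h1]
    · exact (h2 _ _).mpr (Or.inr (Or.inl ⟨rfl, rfl⟩))
  have hconn' : G'.Connected := by
    intro u' v'
    obtain ⟨u, rfl⟩ := hsurj u'
    obtain ⟨v, rfl⟩ := hsurj v'
    have h := hconn u v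
    induction h with
    | refl => exact Relation.ReflTransGen.refl
    | tail _ hstep ih =>
      refine ih.trans ?_
      obtain ⟨e, he⟩ := hstep
      by_cases he0 : e = e₀
      · subst he0
        rcases he with ⟨h1, h2⟩ | ⟨h1, h2⟩ <;> rw [← h1, ← h2, hφe₀]
      · refine Relation.ReflTransGen.single ⟨φE ⟨e, he0⟩, ?_⟩
        rcases hedge ⟨e, he0⟩ with ⟨h1, h2⟩ | ⟨h1, h2⟩ <;>
          rcases he with ⟨h3, h4⟩ | ⟨h3, h4⟩ <;> rw [h1, h2, h3, h4] <;> simp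
  rcases hcase with ⟨hloop, hinj, hw⟩ | ⟨hne, hiff, hw⟩
  · -- loop case
    have hnV : G'.nV = G.nV := by
      have := Fintype.card_congr (Equiv.ofBijective φV ⟨hinj, hsurj⟩)
      simpa using this.symm
    have hsumw : ∑ v', G'.w v' = (∑ v, G.w v) + 1 := by
      simp only [hw]
      rw [Finset.sum_add_distrib, Finset.sum_fiberwise]
      simp
    refine ⟨hpos', hconn', ?_, by omega⟩
    intro v' hv'
    obtain ⟨v, rfl⟩ := hsurj v'
    have hwv := hw (φV v)
    rw [hv'] at hwv
    have hfib : (Finset.univ.filter fun u => φV u = φV v) = {v} := by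
      ext u; simp [hinj.eq_iff]
    rw [hfib, Finset.sum_singleton] at hwv
    have hw0 : G.w v = 0 := by omega
    have hse : G.s e₀ ≠ v := by
      intro h; rw [h] at hwv; simp at hwv
    have hdg := hdeg' (φV v)
    have hcg : ∀ e : {e : Fin G.nE // e ≠ e₀},
        ((if φV (G.s e.1) = φV v then (1:ℕ) else 0) + (if φV (G.t e.1) = φV v then 1 else 0))
        = ((if G.s e.1 = v then 1 else 0) + (if G.t e.1 = v then 1 else 0)) := by
      intro e; simp [hinj.eq_iff]
    rw [Finset.sum_congr rfl (fun e _ => hcg e)] at hdg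
    have hsub := sum_subtype_ne e₀
      (fun e => (if G.s e = v then (1:ℕ) else 0) + (if G.t e = v then 1 else 0))
    beta_reduce at hsub
    have h3 := hdeg v hw0
    rw [WGraph.degree_eq_sum] at h3
    have he₀0 : ((if G.s e₀ = v then (1:ℕ) else 0) + (if G.t e₀ = v then 1 else 0)) = 0 := by
      rw [if_neg hse, if_neg (by rw [← hloop]; exact hse)]
    omega
  · -- non-loop case
    have hψbij : Function.Bijective (fun v : {v : Fin G.nV // v ≠ G.t e₀} => φV v.1) := by
      constructor
      · rintro ⟨a, ha⟩ ⟨b, hb⟩ h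
        simp only [Subtype.mk.injEq]
        rcases (hiff a b).mp h with h | ⟨h1, h2⟩ | ⟨h1, h2⟩
        · exact h
        · exact absurd h2 hb
        · exact absurd h1 ha
      · intro v'
        obtain ⟨v, rfl⟩ := hsurj v'
        by_cases hv : v = G.t e₀
        · subst hv
          exact ⟨⟨G.s e₀, hne⟩, (hiff _ _).mpr (Or.inr (Or.inl ⟨rfl, rfl⟩))⟩
        · exact ⟨⟨v, hv⟩, rfl⟩
    have hnV : G'.nV + 1 = G.nV := by
      have h1 := Fintype.card_congr (Equiv.ofBijective _ hψbij)
      have h2 := card_subtype_ne (G.t e₀)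
      rw [h1, Fintype.card_fin] at h2
      exact h2
    have hsumw : ∑ v', G'.w v' = ∑ v, G.w v := by
      simp only [hw]
      exact Finset.sum_fiberwise _ _ _
    refine ⟨hpos', hconn', ?_, by omega⟩
    intro v' hv'
    have hwv := hw v'
    rw [hv'] at hwv
    by_cases hsv : φV (G.s e₀) = v'
    · -- fiber {s₀, t₀}
      have hts : φV (G.t e₀) = v' := by
        rw [← hsv]; exact (hiff _ _).mpr (Or.inr (Or.inr ⟨rfl, rfl⟩))
      have hall := Finset.sum_eq_zero_iff.mp hwv.symm
      have hws : G.w (G.s e₀) = 0 := hall _ (by simp [hsv])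
      have hwt : G.w (G.t e₀) = 0 := hall _ (by simp [hts])
      have hfib : ∀ x, φV x = v' ↔ (x = G.s e₀ ∨ x = G.t e₀) := by
        intro x
        rw [← hsv, hiff]
        constructor
        · rintro (h | ⟨h, -⟩ | ⟨h, -⟩)
          · exact Or.inl h
          · exact Or.inl h
          · exact Or.inr h
        · rintro (h | h)
          · exact Or.inl h
          · exact Or.inr (Or.inr ⟨h, rfl⟩)
      have hind : ∀ x, (if φV x = v' then (1:ℕ) else 0)
          = (if x = G.s e₀ then 1 else 0) + (if x = G.t e₀ then 1 else 0) := by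
        intro x
        by_cases h1 : x = G.s e₀ <;> by_cases h2 : x = G.t e₀
        · exact absurd (h1.symm.trans h2) hne
        all_goals simp [h1, h2, hfib, hne, hne.symm]
      have hdg := hdeg' v'
      have hsplit : ∀ e : {e : Fin G.nE // e ≠ e₀},
          ((if φV (G.s e.1) = v' then (1:ℕ) else 0) + (if φV (G.t e.1) = v' then 1 else 0))
          = (((if G.s e.1 = G.s e₀ then 1 else 0) + (if G.t e.1 = G.s e₀ then 1 else 0))
            + ((if G.s e.1 = G.t e₀ then 1 else 0) + (if G.t e.1 = G.t e₀ then 1 else 0))) := by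
        intro e; rw [hind, hind]; ring
      rw [Finset.sum_congr rfl (fun e _ => hsplit e), Finset.sum_add_distrib] at hdg
      have hsubs := sum_subtype_ne e₀
        (fun e => (if G.s e = G.s e₀ then (1:ℕ) else 0) + (if G.t e = G.s e₀ then 1 else 0))
      have hsubt := sum_subtype_ne e₀
        (fun e => (if G.s e = G.t e₀ then (1:ℕ) else 0) + (if G.t e = G.t e₀ then 1 else 0))
      beta_reduce at hsubs hsubt
      have h3s := hdeg _ hws; rw [WGraph.degree_eq_sum] at h3s
      have h3t := hdeg _ hwt; rw [WGraph.degree_eq_sum] at h3t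
      have he₀s : ((if G.s e₀ = G.s e₀ then (1:ℕ) else 0) + (if G.t e₀ = G.s e₀ then 1 else 0)) = 1 := by
        simp [hne.symm]
      have he₀t : ((if G.s e₀ = G.t e₀ then (1:ℕ) else 0) + (if G.t e₀ = G.t e₀ then 1 else 0)) = 1 := by
        simp [hne]
      omega
    · -- singleton fiber
      obtain ⟨v, rfl⟩ := hsurj v'
      have hvs : v ≠ G.s e₀ := by
        intro h; subst h; exact hsv rfl
      have hvt : v ≠ G.t e₀ := by
        intro h; subst h
        exact hsv ((hiff _ _).mpr (Or.inr (Or.inl ⟨rfl, rfl⟩)))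
      have hfib : (Finset.univ.filter fun u => φV u = φV v) = {v} := by
        ext u
        simp only [Finset.mem_filter, Finset.mem_univ, true_and, Finset.mem_singleton, hiff]
        constructor
        · rintro (h | ⟨-, h2⟩ | ⟨-, h2⟩)
          · exact h
          · exact absurd h2 hvt
          · exact absurd h2 hvs
        · intro h; exact Or.inl h
      rw [hfib, Finset.sum_singleton] at hwv
      have hw0 : G.w v = 0 := hwv.symm
      have hdg := hdeg' (φV v)
      have hcg : ∀ e : {e : Fin G.nE // e ≠ e₀},
          ((if φV (G.s e.1) = φV v then (1:ℕ) else 0) + (if φV (G.t e.1) = φV v then 1 else 0))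
          = ((if G.s e.1 = v then 1 else 0) + (if G.t e.1 = v then 1 else 0)) := by
        intro e
        have heq : ∀ x, φV x = φV v ↔ x = v := by
          intro x
          rw [hiff]
          constructor
          · rintro (h | ⟨-, h2⟩ | ⟨-, h2⟩)
            · exact h
            · exact absurd h2 hvt
            · exact absurd h2 hvs
          · intro h; exact Or.inl h
        simp only [heq]
      rw [Finset.sum_congr rfl (fun e _ => hcg e)] at hdg
      have hsub := sum_subtype_ne e₀
        (fun e => (if G.s e = v then (1:ℕ) else 0) + (if G.t e = v then 1 else 0))
      beta_reduce at hsub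
      have h3 := hdeg v hw0
      rw [WGraph.degree_eq_sum] at h3
      have he₀0 : ((if G.s e₀ = v then (1:ℕ) else 0) + (if G.t e₀ = v then 1 else 0)) = 0 := by
        rw [if_neg (fun h => hvs h.symm), if_neg (fun h => hvt h.symm)]
      omega

lemma spec_nE_lt {G G' : WGraph} (h : Spec G G') : G = G' ∨ G'.nE < G.nE := by
  induction h with
  | refl => exact Or.inl rfl
  | tail _ hc ih =>
    right
    have h1 := contract1_nE hc
    rcases ih with rfl | hlt <;> omega

/-- The specialization relation on genus-`g` combinatorial types gives a graded partial
order in which the rank of `(G,w)` is `|E(G)|`: one-edge contraction stays in genus `g` and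
drops the edge count by exactly one, specialization is antisymmetric, and `(G',w')` is
covered by `(G,w)` precisely when it is obtained from it by a single edge contraction. -/
theorem specialization_graded_poset (g : ℕ) :
    (∀ G G' : WGraph, G.IsType g → Contract1 G G' → G'.IsType g ∧ G'.nE + 1 = G.nE) ∧
    (∀ G G' : WGraph, Spec G G' → Spec G' G → G = G') ∧
    (∀ G G' : WGraph, G.IsType g → G'.IsType g →
      ((Spec G G' ∧ G ≠ G' ∧
          ¬∃ H : WGraph, H.IsType g ∧ Spec G H ∧ G ≠ H ∧ Spec H G' ∧ H ≠ G')
        ↔ Contract1 G G')) := by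
  refine ⟨fun G G' hG hc => ⟨contract1_isType hG hc, contract1_nE hc⟩, ?_, ?_⟩
  · intro G G' h1 h2
    rcases spec_nE_lt h1 with rfl | hlt
    · rfl
    · rcases spec_nE_lt h2 with rfl | hlt2
      · rfl
      · omega
  · intro G G' hG hG'
    constructor
    · rintro ⟨hs, hne, hnex⟩
      rcases hs.cases_head with rfl | ⟨H, hc, hs'⟩
      · exact absurd rfl hne
      · rcases eq_or_ne H G' with rfl | hH
        · exact hc
        · exfalso
          refine hnex ⟨H, contract1_isType hG hc, Relation.ReflTransGen.single hc, ?_, hs', hH⟩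
          intro h
          have := contract1_nE hc
          rw [h] at this
          omega
    · intro hc
      refine ⟨Relation.ReflTransGen.single hc, ?_, ?_⟩
      · intro h
        have := contract1_nE hc
        rw [← h] at this
        omega
      · rintro ⟨H, -, hGH, hneGH, hHG', hneHG'⟩
        have h1 := contract1_nE hc
        rcases spec_nE_lt hGH with rfl | l1
        · exact hneGH rfl
        rcases spec_nE_lt hHG' with rfl | l2
        · exact hneHG' rfl
        omega
end

section
/- The quotient space of 2×2 real positive semidefinite symmetric matrices with rational nullspace, under the GL_2(ℤ)-action Q ↦ XᵀQX, is not Hausdorff. Specifically, the sequences X_n = [[1, 1/n],[1/n, 1/n²]] and Y_n = [[1/n², 0],[0,0]] satisfy X_n ≡ Y_n under GL_2(ℤ)-equivalence for every n ≥ 1, while X_n → [[1,0],[0,0]] and Y_n → [[0,0],[0,0]], and [[1,0],[0,0]] is not GL_2(ℤ)-equivalent to the zero matrix. -/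
/-! `Xₙ = v vᵀ` with `v = (1, 1/n)`, and `Mᵀ v = (1/n, 0)` for the unimodular shear
`M = !![0, -1; 1, n]`, so `Xₙ ≡ Yₙ`. In a Hausdorff quotient the limits `!![1, 0; 0, 0]` and `0` of the two
sequences would then have the same class; but congruence by an invertible matrix preserves being
zero. All these matrices are `v vᵀ` with `v` rational, whose kernel is spanned by the rational
vector `![-v 1, v 0]`, so they do lie in `S̃²_{≥0}`. -/

open Filter Topology Matrix

/-- A symmetric real matrix has rational nullspace if its kernel is spanned by its vectors
with rational coordinates. -/
def RatNullspace (Q : Matrix (Fin 2) (Fin 2) ℝ) : Prop :=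
  LinearMap.ker Q.mulVecLin = Submodule.span ℝ
    ((LinearMap.ker Q.mulVecLin : Set (Fin 2 → ℝ)) ∩ {x | ∀ i, ∃ q : ℚ, x i = (q : ℝ)})

/-- The space `S̃²_{≥0}` of 2×2 positive semidefinite symmetric real matrices with rational
nullspace. -/
def PSDrat : Type :=
  {Q : Matrix (Fin 2) (Fin 2) ℝ // Q.IsSymm ∧ Q.PosSemidef ∧ RatNullspace Q}

instance : TopologicalSpace PSDrat :=
  instTopologicalSpaceSubtype

/-- `GL₂(ℤ)`-equivalence `Q ↦ XᵀQX` on `S̃²_{≥0}`. -/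
def glEquiv (Q Q' : PSDrat) : Prop :=
  ∃ M : Matrix (Fin 2) (Fin 2) ℤ, IsUnit M.det ∧
    (M.map (Int.cast : ℤ → ℝ))ᵀ * Q.1 * (M.map (Int.cast : ℤ → ℝ)) = Q'.1

lemma ratNullspace_of_ker_eq_span {Q : Matrix (Fin 2) (Fin 2) ℝ} {s : Set (Fin 2 → ℝ)}
    (hs : ∀ x ∈ s, ∀ i, ∃ q : ℚ, x i = (q : ℝ))
    (h : LinearMap.ker Q.mulVecLin = Submodule.span ℝ s) : RatNullspace Q := by
  refine le_antisymm ?_ (Submodule.span_le.2 Set.inter_subset_left)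
  rw [h]
  exact Submodule.span_mono fun x hx => ⟨h ▸ Submodule.subset_span hx, hs x hx⟩

lemma ratNullspace_zero : RatNullspace 0 := by
  refine ratNullspace_of_ker_eq_span (s := Set.range (Pi.basisFun ℝ (Fin 2))) ?_ ?_
  · rintro - ⟨j, rfl⟩ i
    exact ⟨(Pi.single j 1 : Fin 2 → ℚ) i, by by_cases h : i = j <;> simp [h]⟩
  · rw [(Pi.basisFun ℝ (Fin 2)).span_eq, LinearMap.ker_eq_top]
    ext
    simp

lemma ker_mulVecLin_vecMulVec_self {w : Fin 2 → ℝ} (hw : w ≠ 0) :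
    LinearMap.ker (vecMulVec w w).mulVecLin = Submodule.span ℝ {![-w 1, w 0]} := by
  have hww : w ⬝ᵥ w ≠ 0 := mt dotProduct_self_eq_zero.1 hw
  ext x
  simp only [LinearMap.mem_ker, mulVecLin_apply, vecMulVec_mulVec, op_smul_eq_smul,
    smul_eq_zero, hw, or_false, Submodule.mem_span_singleton]
  simp only [dotProduct, Fin.sum_univ_two] at hww ⊢
  constructor
  · intro h
    -- `(w ⬝ᵥ w) • x = (w ⬝ᵥ x) • w + (u ⬝ᵥ x) • u` for the rotation `u = ![-w 1, w 0]`
    refine ⟨(w 0 * x 1 - w 1 * x 0) / (w 0 * w 0 + w 1 * w 1), funext fun i => ?_⟩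
    fin_cases i <;>
      simp only [Fin.zero_eta, Fin.mk_one, Pi.smul_apply, smul_eq_mul, cons_val_zero,
        cons_val_one, div_mul_eq_mul_div, div_eq_iff hww]
    · linear_combination (-w 0) * h
    · linear_combination (-w 1) * h
  · rintro ⟨a, rfl⟩
    simp
    ring

lemma ratNullspace_vecMulVec_self {w : Fin 2 → ℝ} (hw : ∀ i, ∃ q : ℚ, w i = (q : ℝ)) :
    RatNullspace (vecMulVec w w) := by
  rcases eq_or_ne w 0 with rfl | hw0
  · simpa using ratNullspace_zero
  refine ratNullspace_of_ker_eq_span ?_ (ker_mulVecLin_vecMulVec_self hw0)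
  rintro x rfl i
  obtain ⟨q₀, hq₀⟩ := hw 0
  obtain ⟨q₁, hq₁⟩ := hw 1
  fin_cases i
  · exact ⟨-q₁, by simp [hq₁]⟩
  · exact ⟨q₀, by simp [hq₀]⟩

lemma vecMulVec_self_mem {w : Fin 2 → ℝ} (hw : ∀ i, ∃ q : ℚ, w i = (q : ℝ)) :
    (vecMulVec w w).IsSymm ∧ (vecMulVec w w).PosSemidef ∧ RatNullspace (vecMulVec w w) :=
  ⟨transpose_vecMulVec w w, by simpa using posSemidef_vecMulVec_self_star w,
    ratNullspace_vecMulVec_self hw⟩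

lemma vecMulVec_fin_two {R : Type*} [Mul R] (a b : R) :
    vecMulVec ![a, b] ![a, b] = !![a * a, a * b; b * a, b * b] := by
  ext i j
  fin_cases i <;> fin_cases j <;> rfl

def PSDrat.ofRat (a b : ℚ) : PSDrat :=
  ⟨vecMulVec ![(a : ℝ), b] ![(a : ℝ), b], vecMulVec_self_mem fun i => by
    fin_cases i
    exacts [⟨a, rfl⟩, ⟨b, rfl⟩]⟩

lemma PSDrat.ofRat_val (a b : ℚ) :
    (PSDrat.ofRat a b).1 = !![(a : ℝ) ^ 2, a * b; a * b, b ^ 2] :=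
  (vecMulVec_fin_two _ _).trans (by rw [mul_comm (b : ℝ), sq, sq])

lemma isUnit_det_map_intCast {n R : Type*} [Fintype n] [DecidableEq n] [CommRing R]
    {M : Matrix n n ℤ} (hM : IsUnit M.det) : IsUnit (M.map (Int.cast : ℤ → R)).det :=
  RingHom.map_det (Int.castRingHom R) M ▸ hM.map (Int.castRingHom R)

lemma eq_zero_of_transpose_mul_mul_eq_zero {n R : Type*} [Fintype n] [DecidableEq n]
    [CommRing R] {A M : Matrix n n R} (hM : IsUnit M.det) (h : Mᵀ * A * M = 0) : A = 0 :=
  ((isUnit_iff_isUnit_det _).2 (isUnit_det_transpose _ hM)).mul_right_eq_zero.1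
    (((isUnit_iff_isUnit_det _).2 hM).mul_left_eq_zero.1 h)

lemma glEquiv.val_eq_zero_iff {Q Q' : PSDrat} (h : glEquiv Q Q') : Q.1 = 0 ↔ Q'.1 = 0 := by
  obtain ⟨M, hM, hQ'⟩ := h
  rw [← hQ']
  exact ⟨fun hQ => by simp [hQ],
    eq_zero_of_transpose_mul_mul_eq_zero (isUnit_det_map_intCast hM)⟩

lemma PSDrat.val_eq_zero_iff_of_quot_mk_eq {Q Q' : PSDrat}
    (h : Quot.mk glEquiv Q = Quot.mk glEquiv Q') : Q.1 = 0 ↔ Q'.1 = 0 :=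
  Iff.of_eq (congrArg (Quot.lift (fun Q : PSDrat => Q.1 = 0)
    fun _ _ hQ => propext hQ.val_eq_zero_iff) h)

lemma Quot.mk_eq_of_tendsto {α β : Type*} [TopologicalSpace α] {r : α → α → Prop}
    [T2Space (Quot r)] {l : Filter β} [l.NeBot] {x y : β → α} {a b : α}
    (hxy : ∀ᶠ n in l, r (x n) (y n)) (hx : Tendsto x l (𝓝 a)) (hy : Tendsto y l (𝓝 b)) :
    Quot.mk r a = Quot.mk r b :=
  tendsto_nhds_unique ((continuous_quot_mk.tendsto a).comp hx)
    (((continuous_quot_mk.tendsto b).comp hy).congr'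
      (hxy.mono fun _ h => (Quot.sound h).symm))

lemma Filter.Tendsto.matrix_fin_two {α X : Type*} [TopologicalSpace X] {l : Filter α}
    {a b c d : α → X} {a₀ b₀ c₀ d₀ : X} (ha : Tendsto a l (𝓝 a₀)) (hb : Tendsto b l (𝓝 b₀))
    (hc : Tendsto c l (𝓝 c₀)) (hd : Tendsto d l (𝓝 d₀)) :
    Tendsto (fun x => !![a x, b x; c x, d x]) l (𝓝 !![a₀, b₀; c₀, d₀]) :=
  tendsto_pi_nhds.2 fun i => tendsto_pi_nhds.2 fun j => by
    fin_cases i <;> fin_cases j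
    exacts [ha, hb, hc, hd]

lemma Matrix.of_fin_two_zero {R : Type*} [Zero R] : !![(0 : R), 0; 0, 0] = 0 :=
  (eta_fin_two 0).symm

lemma tendsto_one_div_natCast_sq : Tendsto (fun n : ℕ => 1 / (n : ℝ) ^ 2) atTop (𝓝 0) := by
  simpa [div_pow] using (tendsto_one_div_atTop_nhds_zero_nat (𝕜 := ℝ)).pow 2

lemma exists_unimodular_transpose_mul_mul_eq_diag (n : ℕ) (hn : n ≠ 0) :
    ∃ M : Matrix (Fin 2) (Fin 2) ℤ, IsUnit M.det ∧
      (M.map (Int.cast : ℤ → ℝ))ᵀ * !![1, 1/(n:ℝ); 1/(n:ℝ), 1/(n:ℝ)^2]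
          * (M.map (Int.cast : ℤ → ℝ))
        = !![1/(n:ℝ)^2, 0; 0, 0] := by
  refine ⟨!![0, -1; 1, (n:ℤ)], by simp [det_fin_two_of], ?_⟩
  ext i j
  fin_cases i <;> fin_cases j <;> simp [mul_apply, Fin.sum_univ_two] <;> field_simp <;> ring

/-- The quotient `S̃²_{≥0} / GL₂(ℤ)` is not Hausdorff, as witnessed by the sequences
`Xₙ = [[1,1/n],[1/n,1/n²]]` and `Yₙ = [[1/n²,0],[0,0]]`: they are `GL₂(ℤ)`-equivalent for
every `n ≥ 1`, but converge to `[[1,0],[0,0]]` and `0` respectively, which are not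
`GL₂(ℤ)`-equivalent. -/
theorem quotient_not_hausdorff :
    (∀ n : ℕ, 1 ≤ n → ∃ M : Matrix (Fin 2) (Fin 2) ℤ, IsUnit M.det ∧
      (M.map (Int.cast : ℤ → ℝ))ᵀ * !![1, 1/(n:ℝ); 1/(n:ℝ), 1/(n:ℝ)^2]
          * (M.map (Int.cast : ℤ → ℝ))
        = !![1/(n:ℝ)^2, 0; 0, 0]) ∧
    Tendsto (fun n : ℕ => !![1, 1/(n:ℝ); 1/(n:ℝ), 1/(n:ℝ)^2]) atTop (𝓝 !![1, 0; 0, 0]) ∧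
    Tendsto (fun n : ℕ => !![1/(n:ℝ)^2, 0; 0, 0]) atTop
      (𝓝 (0 : Matrix (Fin 2) (Fin 2) ℝ)) ∧
    (¬ ∃ M : Matrix (Fin 2) (Fin 2) ℤ, IsUnit M.det ∧
      (M.map (Int.cast : ℤ → ℝ))ᵀ * !![1, 0; 0, 0] * (M.map (Int.cast : ℤ → ℝ)) = 0) ∧
    ¬ T2Space (Quot glEquiv) := by
  have hequiv (n : ℕ) (hn : 1 ≤ n) := exists_unimodular_transpose_mul_mul_eq_diag n (by omega)
  have hX : Tendsto (fun n : ℕ => !![1, 1/(n:ℝ); 1/(n:ℝ), 1/(n:ℝ)^2]) atTop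
      (𝓝 !![1, 0; 0, 0]) :=
    tendsto_const_nhds.matrix_fin_two tendsto_one_div_atTop_nhds_zero_nat
      tendsto_one_div_atTop_nhds_zero_nat tendsto_one_div_natCast_sq
  have hY : Tendsto (fun n : ℕ => !![1/(n:ℝ)^2, 0; 0, 0]) atTop (𝓝 0) := by
    rw [← Matrix.of_fin_two_zero]
    exact tendsto_one_div_natCast_sq.matrix_fin_two tendsto_const_nhds tendsto_const_nhds
      tendsto_const_nhds
  have hE : !![(1:ℝ), 0; 0, 0] ≠ 0 := fun h => one_ne_zero (congrFun (congrFun h 0) 0)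
  refine ⟨hequiv, hX, hY,
    fun ⟨M, hM, h⟩ => hE (eq_zero_of_transpose_mul_mul_eq_zero (isUnit_det_map_intCast hM) h),
    fun _ => hE ?_⟩
  have key : Quot.mk glEquiv (PSDrat.ofRat 1 0) = Quot.mk glEquiv (PSDrat.ofRat 0 0) :=
    Quot.mk_eq_of_tendsto (x := fun n : ℕ => PSDrat.ofRat 1 (1 / n))
      (y := fun n => PSDrat.ofRat (1 / n) 0)
      ((eventually_ge_atTop 1).mono fun n hn => by
        simpa [glEquiv, PSDrat.ofRat_val] using hequiv n hn)
      (tendsto_subtype_rng.2 (by simpa [PSDrat.ofRat_val] using hX))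
      (tendsto_subtype_rng.2 (by simpa [PSDrat.ofRat_val, Matrix.of_fin_two_zero] using hY))
  have hzero : (PSDrat.ofRat 0 0).1 = 0 := by simp [PSDrat.ofRat_val, Matrix.of_fin_two_zero]
  simpa [PSDrat.ofRat_val] using (PSDrat.val_eq_zero_iff_of_quot_mk_eq key).2 hzero
end
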